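/- arXiv:0809.2623 — 2 statements merged into one kernel-verified Lean document; each statement's English description precedes it below -/
import Mathlib

section
/- For every n ≥ 4, the radio number of the gear graph G_n equals 4n + 2, i.e., rn(G_n) = 4n + 2. -/
/-- A radio labeling of a graph `G` is an injective assignment of positive
integers to the vertices such that `d(u,v) + |c(u) - c(v)| ≥ diam(G) + 1`
for all pairs of distinct vertices. -/
def IsRadioLabeling {V : Type*} [Fintype V] (G : SimpleGraph V) (c : V → ℕ) : Prop :=
  Function.Injective c ∧ (∀ v, 1 ≤ c v) ∧
    ∀ u v : V, u ≠ v →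
      (G.diam : ℤ) + 1 ≤ (G.dist u v : ℤ) + |(c u : ℤ) - (c v : ℤ)|

/-- The radio number of `G`: the least possible span (maximum label used)
of a radio labeling of `G`. -/
noncomputable def radioNumber {V : Type*} [Fintype V] (G : SimpleGraph V) : ℕ :=
  sInf {s : ℕ | ∃ c : V → ℕ, IsRadioLabeling G c ∧ s = Finset.univ.sup c}

/-- The gear graph `G_n`: the center `none` is adjacent to each `v i = some (Sum.inl i)`,
and each `w i = some (Sum.inr i)` is adjacent to `v i` and `v (i+1)` (indices mod `n`);
thus the `v`'s and `w`'s alternate around a cycle of length `2n`. -/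
def gearGraph (n : ℕ) : SimpleGraph (Option (Fin n ⊕ Fin n)) :=
  SimpleGraph.fromRel (fun u v =>
    (∃ i : Fin n, u = none ∧ v = some (Sum.inl i)) ∨
    (∃ i j : Fin n, u = some (Sum.inr i) ∧ v = some (Sum.inl j) ∧
      (j = i ∨ (i.val + 1) % n = j.val)))

/-!
Lower bound (Liu's argument for radio numbers): list the vertices by increasing label
`x₀, …, x_{2n}`. Each gap `c x_{k+1} - c x_k` is at least
`diam + 1 - d(x_k, x_{k+1}) ≥ 5 - d(x_k, z) - d(x_{k+1}, z)`; summing the `2n` gaps, with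
`∑ d(·, z) = 3n` and `d(x₀, z) + d(x_{2n}, z) ≥ 1`, the span is at least
`1 + 10n - 6n + 1 = 4n + 2`.

Upper bound: an explicit labeling of span `4n + 2`, checked pair by pair; the distance lower bounds
this needs come from parity, since `{v_i}` and `{z, w_i}` bipartition `G_n`.
-/

open SimpleGraph Finset

theorem SimpleGraph.Connected.even_dist_iff {V : Type*} {G : SimpleGraph V} (hG : G.Connected)
    (col : G.Coloring Bool) (u v : V) : Even (G.dist u v) ↔ (col u ↔ col v) := by
  obtain ⟨p, hp⟩ := hG.exists_walk_length_eq_dist u v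
  rw [← hp, col.even_length_iff_congr]

section RadioLabeling

variable {V : Type*} [Fintype V] {G : SimpleGraph V} {c : V → ℕ}

theorem isRadioLabeling_iff_of_connected (hG : G.Connected) :
    IsRadioLabeling G c ↔ (∀ v, 1 ≤ c v) ∧
      ∀ u v : V, u ≠ v → (G.diam : ℤ) + 1 ≤ (G.dist u v : ℤ) + |(c u : ℤ) - (c v : ℤ)| := by
  refine ⟨fun hc => hc.2, fun ⟨hpos, hgap⟩ => ⟨fun u v huv => ?_, hpos, hgap⟩⟩
  by_contra hne
  have := hG.nonempty
  have hdiam : G.dist u v ≤ G.diam :=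
    dist_le_diam (connected_iff_ediam_ne_top.mp hG)
  have := hgap u v hne
  rw [huv, sub_self, abs_zero] at this
  omega

theorem radioNumber_le (hc : IsRadioLabeling G c) : radioNumber G ≤ univ.sup c :=
  Nat.sInf_le ⟨c, hc, rfl⟩

theorem le_radioNumber {N : ℕ} (hc : IsRadioLabeling G c)
    (h : ∀ c', IsRadioLabeling G c' → N ≤ univ.sup c') : N ≤ radioNumber G :=
  le_csInf ⟨_, c, hc, rfl⟩ fun _ ⟨c', hc', hs⟩ => hs ▸ h c' hc'

namespace IsRadioLabeling

theorem diam_add_one_le_dist_add_dist (hc : IsRadioLabeling G c) (hG : G.Connected) (z : V)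
    {u v : V} (huv : u ≠ v) :
    (G.diam : ℤ) + 1 ≤ G.dist u z + G.dist v z + |(c u : ℤ) - c v| := by
  have htri : G.dist u v ≤ G.dist u z + G.dist v z := by
    simpa only [G.dist_comm (u := z)] using hG.dist_triangle (u := u) (v := z) (w := v)
  have := hc.2.2 u v huv
  omega

theorem exists_max_sub_min_ge (hc : IsRadioLabeling G c) (hG : G.Connected) (z : V)
    (s : Finset V) {b : V} (hb : b ∈ s) (hb_min : ∀ x ∈ s, c b ≤ c x) :
    ∃ a ∈ s, (∀ x ∈ s, c x ≤ c a) ∧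
      ((#s : ℤ) - 1) * (G.diam + 1) + G.dist a z + G.dist b z ≤
        (c a : ℤ) - c b + 2 * ∑ x ∈ s, (G.dist x z : ℤ) := by
  classical
  induction s using Finset.induction_on_max_value c with
  | empty => simp at hb
  | insert a₀ s ha₀ h_max ih =>
    refine ⟨a₀, mem_insert_self _ _, ?_, ?_⟩
    · simpa only [forall_mem_insert, le_refl, true_and] using h_max
    rw [card_insert_of_notMem ha₀, sum_insert ha₀]
    obtain rfl | ⟨x, hx⟩ := s.eq_empty_or_nonempty
    · obtain rfl : b = a₀ := by simpa using hb
      simp [two_mul]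
    have hb_ne : b ≠ a₀ := by
      rintro rfl
      have hcx : c x = c b := le_antisymm (h_max x hx) (hb_min x (mem_insert_of_mem hx))
      exact ha₀ (hc.1 hcx ▸ hx)
    obtain ⟨a, ha, ha_max, ih⟩ :=
      ih (by simpa [hb_ne] using hb) fun x hx => hb_min x (mem_insert_of_mem hx)
    have hgap := hc.diam_add_one_le_dist_add_dist hG z (ne_of_mem_of_not_mem ha ha₀).symm
    rw [abs_of_nonneg (by simpa using h_max a ha)] at hgap
    push_cast
    linarith

theorem card_sub_one_mul_le_sup_add_sum_dist (hc : IsRadioLabeling G c) (hG : G.Connected)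
    [Nontrivial V] (z : V) :
    ((Fintype.card V : ℤ) - 1) * (G.diam + 1) + 2 ≤
      univ.sup c + 2 * ∑ x, (G.dist x z : ℤ) := by
  obtain ⟨b, -, hb_min⟩ := univ.exists_min_image c univ_nonempty
  obtain ⟨a, -, ha_max, h⟩ :=
    hc.exists_max_sub_min_ge hG z univ (mem_univ b) fun x _ => hb_min x (mem_univ x)
  have hab : a ≠ b := by
    obtain ⟨x, y, hxy⟩ := exists_pair_ne V
    rintro rfl
    have hconst : ∀ v, c v = c a := fun v =>
      le_antisymm (ha_max v (mem_univ v)) (hb_min v (mem_univ v))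
    exact hxy (hc.1 ((hconst x).trans (hconst y).symm))
  have hends : (1 : ℤ) ≤ G.dist a z + G.dist b z := by
    by_cases ha : a = z
    · have := hG.pos_dist_of_ne (ha ▸ hab).symm
      omega
    · have := hG.pos_dist_of_ne ha
      omega
  have hsup : (c a : ℤ) ≤ univ.sup c := by exact_mod_cast le_sup (mem_univ a)
  have hb_pos : (1 : ℤ) ≤ c b := by exact_mod_cast hc.2.1 b
  rw [card_univ] at h
  linarith

end IsRadioLabeling

end RadioLabeling

namespace GearGraph

variable {n : ℕ}

theorem adj_inr_inl_iff {i j : Fin n} :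
    (gearGraph n).Adj (some (.inr i)) (some (.inl j)) ↔
      (j : ℕ) = i ∨ (j : ℕ) = i + 1 ∨ ((i : ℕ) + 1 = n ∧ (j : ℕ) = 0) := by
  have hi := i.isLt
  have hmod : ((i : ℕ) + 1) % n = if (i : ℕ) + 1 = n then 0 else (i : ℕ) + 1 := by
    split_ifs with h
    · simp [h]
    · exact Nat.mod_eq_of_lt (by omega)
  have hadj : (gearGraph n).Adj (some (.inr i)) (some (.inl j)) ↔
      j = i ∨ ((i : ℕ) + 1) % n = j := by
    simp [gearGraph]
  rw [hadj, ← Fin.val_inj, hmod]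
  split_ifs <;> omega

def coloring (n : ℕ) : (gearGraph n).Coloring Bool :=
  Coloring.mk (fun u => u.elim false Sum.isLeft) <| by
    rintro (_ | j | i) (_ | j' | i') h <;> simp_all [gearGraph]

@[simp] theorem coloring_apply (u : Option (Fin n ⊕ Fin n)) :
    coloring n u = u.elim false Sum.isLeft := rfl

theorem connected : (gearGraph n).Connected := by
  rw [connected_iff_exists_forall_reachable]
  refine ⟨none, ?_⟩
  rintro (_ | j | i)
  · rfl
  · exact Adj.reachable (by simp [gearGraph])
  · exact (Adj.reachable (v := some (.inl i)) (by simp [gearGraph])).trans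
      (adj_inr_inl_iff.mpr (Or.inl rfl)).symm.reachable

theorem dist_inl_none (j : Fin n) : (gearGraph n).dist (some (.inl j)) none = 1 :=
  dist_eq_one_iff_adj.mpr (by simp [gearGraph])

theorem dist_inr_none (i : Fin n) : (gearGraph n).dist (some (.inr i)) none = 2 := by
  have hle := dist_le (.cons (adj_inr_inl_iff.mpr (Or.inl rfl))
    (.cons (by simp [gearGraph]) .nil) : (gearGraph n).Walk (some (.inr i)) none)
  have heven := (connected.even_dist_iff (coloring n) (some (.inr i)) none).mpr (by simp)
  have hpos := connected.pos_dist_of_ne (G := gearGraph n) (u := some (.inr i)) (v := none)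
    (by simp)
  simp only [Walk.length_cons, Walk.length_nil] at hle
  rcases heven with ⟨k, hk⟩
  omega

theorem three_le_dist_of_not_adj {i j : Fin n}
    (h : ¬(gearGraph n).Adj (some (.inr i)) (some (.inl j))) :
    3 ≤ (gearGraph n).dist (some (.inr i)) (some (.inl j)) := by
  have hodd : ¬Even ((gearGraph n).dist (some (.inr i)) (some (.inl j))) := by
    simp [connected.even_dist_iff (coloring n)]
  have hpos := connected.pos_dist_of_ne (G := gearGraph n) (u := some (.inr i)) (v := some (.inl j))
    (by simp)
  have hne_one := mt dist_eq_one_iff_adj.mp h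
  rw [Nat.not_even_iff_odd] at hodd
  rcases hodd with ⟨k, hk⟩
  omega

theorem dist_none_le_two (u : Option (Fin n ⊕ Fin n)) : (gearGraph n).dist u none ≤ 2 := by
  rcases u with _ | j | i <;> simp [dist_inl_none, dist_inr_none]

theorem sum_dist_none : ∑ u, ((gearGraph n).dist u none : ℤ) = 3 * n := by
  simp [Fintype.sum_option, Fintype.sum_sum_type, dist_inl_none, dist_inr_none]
  ring

theorem four_le_dist_inr_inr (hn : 4 ≤ n) :
    4 ≤ (gearGraph n).dist (some (.inr ⟨0, by omega⟩)) (some (.inr ⟨2, by omega⟩)) := by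
  set d := (gearGraph n).dist (some (.inr ⟨0, by omega⟩)) (some (.inr ⟨2, by omega⟩))
  have heven : Even d := by simp [d, connected.even_dist_iff (coloring n)]
  have hpos : 0 < d := connected.pos_dist_of_ne (by simp)
  have hne_two : d ≠ 2 := by
    intro h2
    rw [← Nat.cast_inj (R := ℕ∞), (connected _ _).coe_dist_eq_edist, Nat.cast_ofNat,
      edist_eq_two_iff] at h2
    obtain ⟨x, hx₀, hx₂⟩ := h2.2.2
    rcases x with _ | j | i
    · simp [gearGraph] at hx₀
    · simp only [mem_neighborSet, adj_inr_inl_iff] at hx₀ hx₂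
      omega
    · simp [gearGraph] at hx₀
  rcases heven with ⟨k, hk⟩
  omega

theorem diam_eq (hn : 4 ≤ n) : (gearGraph n).diam = 4 := by
  refine le_antisymm ?_ ((four_le_dist_inr_inr hn).trans
    (dist_le_diam (connected_iff_ediam_ne_top.mp connected)))
  obtain ⟨u, v, huv⟩ := (gearGraph n).exists_dist_eq_diam
  have htri : (gearGraph n).dist u v ≤ (gearGraph n).dist u none + (gearGraph n).dist none v :=
    connected.dist_triangle
  rw [dist_comm (u := none)] at htri
  linarith [dist_none_le_two u, dist_none_le_two v]

/-- The labels run `z, w₀, v₃, w₁, v₄, …, w_{n-1}, v₂` with gaps `3, 2, 2, …`: each `v_{i+3}` sits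
between `w_i` and `w_{i+1}`, which for `n ≥ 4` are both at distance `3` from it. -/
def label (n : ℕ) : Option (Fin n ⊕ Fin n) → ℕ
  | none => 1
  | some (.inl j) => if 3 ≤ (j : ℕ) then 4 * (j - 3) + 6 else 4 * (j + n - 3) + 6
  | some (.inr i) => 4 * i + 4

theorem label_le (u : Option (Fin n ⊕ Fin n)) : label n u ≤ 4 * n + 2 := by
  rcases u with _ | j | i
  · simp only [label]; omega
  · have := j.isLt; simp only [label]; split_ifs <;> omega
  · have := i.isLt; simp only [label]; omega

theorem five_le_dist_add_abs_label_inr_inl (hn : 4 ≤ n) (i j : Fin n) :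
    (5 : ℤ) ≤ (gearGraph n).dist (some (.inr i)) (some (.inl j)) +
      |(label n (some (.inr i)) : ℤ) - label n (some (.inl j))| := by
  have hi := i.isLt
  have hj := j.isLt
  by_cases hadj : (gearGraph n).Adj (some (.inr i)) (some (.inl j))
  · have hd : (gearGraph n).dist (some (.inr i)) (some (.inl j)) = 1 :=
      dist_eq_one_iff_adj.mpr hadj
    have hlabel : (4 : ℤ) ≤ |(label n (some (.inr i)) : ℤ) - label n (some (.inl j))| := by
      rw [adj_inr_inl_iff] at hadj
      rw [le_abs]; simp only [label]; split_ifs <;> omega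
    rw [hd]; push_cast; linarith
  · have hd := three_le_dist_of_not_adj hadj
    have hlabel : (2 : ℤ) ≤ |(label n (some (.inr i)) : ℤ) - label n (some (.inl j))| := by
      rw [le_abs]; simp only [label]; split_ifs <;> omega
    have : (3 : ℤ) ≤ (gearGraph n).dist (some (.inr i)) (some (.inl j)) := by exact_mod_cast hd
    linarith

theorem five_le_dist_add_abs_label (hn : 4 ≤ n) {u v : Option (Fin n ⊕ Fin n)} (huv : u ≠ v) :
    (5 : ℤ) ≤ (gearGraph n).dist u v + |(label n u : ℤ) - label n v| := by
  have hpos : (1 : ℤ) ≤ (gearGraph n).dist u v := by exact_mod_cast connected.pos_dist_of_ne huv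
  rcases u with _ | j | i <;> rcases v with _ | j' | i'
  · exact absurd rfl huv
  case some.inr.some.inl => exact five_le_dist_add_abs_label_inr_inl hn i j'
  case some.inl.some.inr =>
    rw [dist_comm, abs_sub_comm]
    exact five_le_dist_add_abs_label_inr_inl hn i' j
  case none.some.inr =>
    rw [dist_comm, dist_inr_none]
    have : (3 : ℤ) ≤ |(label n none : ℤ) - label n (some (.inr i'))| := by
      rw [le_abs]; simp only [label]; omega
    push_cast; linarith
  case some.inr.none =>
    rw [dist_inr_none]
    have : (3 : ℤ) ≤ |(label n (some (.inr i)) : ℤ) - label n none| := by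
      rw [le_abs]; simp only [label]; omega
    push_cast; linarith
  all_goals
    refine (add_le_add hpos ?_ : (1 : ℤ) + 4 ≤ _)
    simp only [ne_eq, Option.some.injEq, Sum.inl.injEq, Sum.inr.injEq, ← Fin.val_inj] at huv
    rw [le_abs]; simp only [label]; (try split_ifs) <;> omega

theorem isRadioLabeling_label (hn : 4 ≤ n) : IsRadioLabeling (gearGraph n) (label n) := by
  refine (isRadioLabeling_iff_of_connected connected).mpr ⟨fun u => ?_, fun u v huv => ?_⟩
  · rcases u with _ | j | i <;> simp only [label] <;> (try split_ifs) <;> omega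
  · rw [diam_eq hn]
    exact_mod_cast five_le_dist_add_abs_label hn huv

theorem le_sup_of_isRadioLabeling (hn : 4 ≤ n) {c : Option (Fin n ⊕ Fin n) → ℕ}
    (hc : IsRadioLabeling (gearGraph n) c) : 4 * n + 2 ≤ univ.sup c := by
  have : Nontrivial (Option (Fin n ⊕ Fin n)) :=
    nontrivial_of_ne none (some (.inl ⟨0, by omega⟩)) (by simp)
  have h := hc.card_sub_one_mul_le_sup_add_sum_dist connected none
  simp only [Fintype.card_option, Fintype.card_sum, Fintype.card_fin, diam_eq hn,
    sum_dist_none] at h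
  push_cast at h
  omega

end GearGraph

/-- For `n ≥ 4`, the radio number of the gear graph `G_n` is `4n + 2`. -/
theorem radioNumber_gear (n : ℕ) (hn : 4 ≤ n) :
    radioNumber (gearGraph n) = 4 * n + 2 :=
  le_antisymm ((radioNumber_le (GearGraph.isRadioLabeling_label hn)).trans
      (Finset.sup_le fun u _ => GearGraph.label_le u))
    (le_radioNumber (GearGraph.isRadioLabeling_label hn)
      fun _ hc => GearGraph.le_sup_of_isRadioLabeling hn hc)
end

section
/- The radio number of the gear graph G_6 equals 26, i.e., rn(G_6) = 4·6 + 2 = 26. -/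
open Finset

theorem Fin.mul_add_le_of_gap_le {m : ℕ} (K : ℤ) (a f : Fin (m + 1) → ℤ)
    (h : ∀ i : Fin m, K ≤ a i.castSucc + a i.succ + (f i.succ - f i.castSucc)) :
    m * K + a 0 + a (Fin.last m) ≤ f (Fin.last m) - f 0 + 2 * ∑ i, a i := by
  have hsum := Finset.sum_le_sum fun i (_ : i ∈ univ) => h i
  simp only [sum_add_distrib, sum_sub_distrib, sum_const, nsmul_eq_mul] at hsum
  linarith [Fin.sum_univ_succ a, Fin.sum_univ_castSucc a, Fin.sum_univ_succ f,
    Fin.sum_univ_castSucc f]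

theorem Fintype.exists_equiv_fin_strictMono_comp {V β : Type*} [Fintype V] [LinearOrder β]
    {c : V → β} (hc : Function.Injective c) {n : ℕ} (hn : Fintype.card V = n) :
    ∃ e : Fin n ≃ V, StrictMono (c ∘ e) := by
  let : LinearOrder V := LinearOrder.lift' c hc
  exact ⟨(Fintype.orderIsoFinOfCardEq V hn).toEquiv, (Fintype.orderIsoFinOfCardEq V hn).strictMono⟩

namespace SimpleGraph

variable {V : Type*} {G : SimpleGraph V} {D : V → V → ℕ}

theorem Walk.le_length_of_le_succ_of_adj (hself : ∀ u, D u u = 0)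
    (hstep : ∀ u v w, G.Adj u v → D u w ≤ D v w + 1) {u v : V} (p : G.Walk u v) :
    D u v ≤ p.length := by
  induction p with
  | nil => simp [hself]
  | @cons a b _ hab p ih =>
    rw [Walk.length_cons]
    exact (hstep a b _ hab).trans (by omega)

theorem reachable_and_dist_le_of_descent
    (hdesc : ∀ u v, u ≠ v → ∃ x, G.Adj u x ∧ D x v < D u v) (u v : V) :
    G.Reachable u v ∧ G.dist u v ≤ D u v := by
  induction hD : D u v using Nat.strong_induction_on generalizing u with
  | _ n ih =>
    by_cases huv : u = v
    · subst huv
      simp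
    obtain ⟨x, hux, hx⟩ := hdesc u v huv
    obtain ⟨hxv, hdist⟩ := ih (D x v) (hD ▸ hx) x rfl
    obtain ⟨p, hp⟩ := hxv.exists_walk_length_eq_dist
    refine ⟨hux.reachable.trans hxv, ?_⟩
    calc G.dist u v ≤ (Walk.cons hux p).length := dist_le _
      _ ≤ n := by rw [Walk.length_cons]; omega

theorem connected_of_descent [Nonempty V]
    (hdesc : ∀ u v, u ≠ v → ∃ x, G.Adj u x ∧ D x v < D u v) : G.Connected :=
  Connected.mk fun u v => (reachable_and_dist_le_of_descent hdesc u v).1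

theorem dist_eq_of_descent (hself : ∀ u, D u u = 0)
    (hstep : ∀ u v w, G.Adj u v → D u w ≤ D v w + 1)
    (hdesc : ∀ u v, u ≠ v → ∃ x, G.Adj u x ∧ D x v < D u v) (u v : V) :
    G.dist u v = D u v := by
  obtain ⟨huv, hle⟩ := reachable_and_dist_le_of_descent hdesc u v
  obtain ⟨p, hp⟩ := huv.exists_walk_length_eq_dist
  exact hle.antisymm (hp ▸ p.le_length_of_le_succ_of_adj hself hstep)

theorem Connected.one_le_dist_add_dist_of_ne (hG : G.Connected) (z : V) {u v : V}
    (huv : u ≠ v) : 1 ≤ G.dist z u + G.dist z v := by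
  by_cases hz : z = u
  · have := hG.pos_dist_of_ne (hz ▸ huv); omega
  · have := hG.pos_dist_of_ne hz; omega

end SimpleGraph

namespace IsRadioLabeling

variable {V : Type*} [Fintype V] {G : SimpleGraph V} {c : V → ℕ}

theorem diam_add_one_le (hc : IsRadioLabeling G c) {u v : V} (huv : c u < c v) :
    (G.diam : ℤ) + 1 ≤ G.dist u v + ((c v : ℤ) - c u) := by
  have h := hc.2.2 u v fun h => huv.ne (congrArg c h)
  rwa [abs_sub_comm, abs_of_pos (by omega)] at h

theorem card_sub_one_mul_add_two_le [Nontrivial V] (hc : IsRadioLabeling G c)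
    (hG : G.Connected) (z : V) :
    (Fintype.card V - 1) * (G.diam + 1) + 2 ≤ univ.sup c + 2 * ∑ v, G.dist z v := by
  obtain ⟨m, hm⟩ := Nat.exists_eq_add_one_of_ne_zero (Fintype.card_ne_zero (α := V))
  have hm1 : 1 ≤ m := by have := Fintype.one_lt_card (α := V); omega
  obtain ⟨e, he⟩ := Fintype.exists_equiv_fin_strictMono_comp hc.1 hm
  have gap (i : Fin m) : (G.diam : ℤ) + 1 ≤ G.dist z (e i.castSucc) + G.dist z (e i.succ) +
      ((c (e i.succ) : ℤ) - c (e i.castSucc)) := by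
    have hlabel := hc.diam_add_one_le (he (Fin.castSucc_lt_succ (i := i)))
    have htri := hG.dist_triangle (u := e i.castSucc) (v := z) (w := e i.succ)
    rw [SimpleGraph.dist_comm (u := e i.castSucc) (v := z)] at htri
    omega
  have hchain := Fin.mul_add_le_of_gap_le _ (fun i => (G.dist z (e i) : ℤ))
    (fun i => (c (e i) : ℤ)) gap
  have hlevels : ∑ i, (G.dist z (e i) : ℤ) = ∑ v, (G.dist z v : ℤ) :=
    e.sum_comp fun v => (G.dist z v : ℤ)
  have hends : 1 ≤ G.dist z (e 0) + G.dist z (e (Fin.last m)) :=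
    hG.one_le_dist_add_dist_of_ne z
      (e.injective.ne (by rw [Ne, Fin.ext_iff, Fin.val_zero, Fin.val_last]; omega))
  have hfirst : 1 ≤ c (e 0) := hc.2.1 _
  have hlast : c (e (Fin.last m)) ≤ univ.sup c := le_sup (mem_univ _)
  rw [hm, Nat.add_sub_cancel]
  zify
  linarith

end IsRadioLabeling

theorem radioNumber_eq_of_forall_sup_le {V : Type*} [Fintype V] {G : SimpleGraph V}
    {c : V → ℕ} (hc : IsRadioLabeling G c)
    (hmin : ∀ c', IsRadioLabeling G c' → univ.sup c ≤ univ.sup c') :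
    radioNumber G = univ.sup c :=
  IsLeast.csInf_eq ⟨⟨c, hc, rfl⟩, by rintro _ ⟨c', hc', rfl⟩; exact hmin c' hc'⟩

instance (n : ℕ) : DecidableRel (gearGraph n).Adj := fun u v =>
  decidable_of_iff' _ (SimpleGraph.fromRel_adj _ u v)

def gearDist (n : ℕ) : Option (Fin n ⊕ Fin n) → Option (Fin n ⊕ Fin n) → ℕ
  | none, none => 0
  | none, some (Sum.inl _) | some (Sum.inl _), none => 1
  | none, some (Sum.inr _) | some (Sum.inr _), none => 2
  | some (Sum.inl i), some (Sum.inl j) => if i = j then 0 else 2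
  | some (Sum.inl i), some (Sum.inr j) | some (Sum.inr j), some (Sum.inl i) =>
      if i = j ∨ i.val = (j.val + 1) % n then 1 else 3
  | some (Sum.inr i), some (Sum.inr j) =>
      if i = j then 0 else if (i.val + 1) % n = j.val ∨ (j.val + 1) % n = i.val then 2 else 4

theorem gearGraph_six_connected : (gearGraph 6).Connected :=
  SimpleGraph.connected_of_descent (D := gearDist 6) (by decide)

theorem gearGraph_six_dist (u v : Option (Fin 6 ⊕ Fin 6)) :
    (gearGraph 6).dist u v = gearDist 6 u v :=
  SimpleGraph.dist_eq_of_descent (by decide) (by decide) (by decide) u v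

theorem gearGraph_six_diam : (gearGraph 6).diam = 4 := by
  apply le_antisymm
  · obtain ⟨u, v, huv⟩ := (gearGraph 6).exists_dist_eq_diam
    rw [← huv, gearGraph_six_dist]
    exact (show ∀ u v, gearDist 6 u v ≤ 4 by decide) u v
  · have h := SimpleGraph.dist_le_diam
      (SimpleGraph.connected_iff_ediam_ne_top.mp gearGraph_six_connected)
      (u := some (Sum.inr 0)) (v := some (Sum.inr 2))
    rwa [gearGraph_six_dist] at h

theorem sum_gearGraph_six_dist_center : ∑ v, (gearGraph 6).dist none v = 18 := by
  simp only [gearGraph_six_dist]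
  decide

def gearSixLabeling : Option (Fin 6 ⊕ Fin 6) → ℕ
  | none => 26
  | some (Sum.inl i) => ![16, 1, 13, 21, 10, 5] i
  | some (Sum.inr i) => ![7, 18, 8, 3, 19, 23] i

theorem isRadioLabeling_gearSixLabeling : IsRadioLabeling (gearGraph 6) gearSixLabeling := by
  refine ⟨by decide, by decide, fun u v huv => ?_⟩
  rw [gearGraph_six_diam, gearGraph_six_dist]
  revert u v
  decide

theorem sup_gearSixLabeling : univ.sup gearSixLabeling = 26 := by decide

/-- The radio number of the gear graph `G_6` is `26`. -/
theorem radioNumber_gear_6 : radioNumber (gearGraph 6) = 26 := by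
  have hspan (c) (hc : IsRadioLabeling (gearGraph 6) c) : 26 ≤ univ.sup c := by
    have hbound := hc.card_sub_one_mul_add_two_le gearGraph_six_connected none
    rw [gearGraph_six_diam, sum_gearGraph_six_dist_center] at hbound
    simp only [Fintype.card_option, Fintype.card_sum, Fintype.card_fin] at hbound
    omega
  rw [radioNumber_eq_of_forall_sup_le isRadioLabeling_gearSixLabeling
    (fun c hc => sup_gearSixLabeling ▸ hspan c hc), sup_gearSixLabeling]
end
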